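/- In the two-recipient resource allocation problem maximizing ξ₁·R(B₁,P₁) + ξ₂·R(B₂,P₂) subject to B₁+B₂ = B, P₁+P₂ = P (identical channels g₁ = g₂), if ξ₁ > ξ₂ then at the optimum B₁* > B₂* and P₁* > P₂*. -/

import Mathlib

open Real

private lemma rate_nonneg (g N0 b p : ℝ) (hg : 0 < g) (hN0 : 0 < N0)
    (hb : 0 ≤ b) (hp : 0 ≤ p) :
    0 ≤ b * Real.logb 2 (1 + p / (g * b * N0)) := by
  have hden : 0 ≤ g * b * N0 := mul_nonneg (mul_nonneg hg.le hb) hN0.le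
  have h1 : (1:ℝ) ≤ 1 + p / (g * b * N0) := by
    have := div_nonneg hp hden; linarith
  exact mul_nonneg hb (Real.logb_nonneg one_lt_two h1)

private lemma rate_mono_P (g N0 b p p' : ℝ) (hg : 0 < g) (hN0 : 0 < N0)
    (hb : 0 ≤ b) (hp : 0 ≤ p) (hpp : p ≤ p') :
    b * Real.logb 2 (1 + p / (g * b * N0)) ≤ b * Real.logb 2 (1 + p' / (g * b * N0)) := by
  rcases eq_or_lt_of_le hb with h | h
  · simp [← h]
  · have hden : 0 < g * b * N0 := by positivity
    have h1 : (0:ℝ) < 1 + p / (g * b * N0) := by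
      have := div_nonneg hp hden.le; linarith
    apply mul_le_mul_of_nonneg_left _ hb
    apply Real.logb_le_logb_of_le one_lt_two h1
    have : p / (g * b * N0) ≤ p' / (g * b * N0) := by gcongr
    linarith

private lemma rate_strict_P (g N0 b p p' : ℝ) (hg : 0 < g) (hN0 : 0 < N0)
    (hb : 0 < b) (hp : 0 ≤ p) (hpp : p < p') :
    b * Real.logb 2 (1 + p / (g * b * N0)) < b * Real.logb 2 (1 + p' / (g * b * N0)) := by
  have hden : 0 < g * b * N0 := by positivity
  have h1 : (0:ℝ) < 1 + p / (g * b * N0) := by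
    have := div_nonneg hp hden.le; linarith
  apply mul_lt_mul_of_pos_left _ hb
  apply Real.logb_lt_logb one_lt_two h1
  have : p / (g * b * N0) < p' / (g * b * N0) := by gcongr
  linarith

private lemma rate_strict_B (g N0 b B p : ℝ) (hg : 0 < g) (hN0 : 0 < N0)
    (hp : 0 < p) (hb : 0 < b) (hB : b < B) :
    b * Real.logb 2 (1 + p / (g * b * N0)) < B * Real.logb 2 (1 + p / (g * B * N0)) := by
  have hB0 : 0 < B := hb.trans hB
  have hden : 0 < g * b * N0 := by positivity
  have hdenB : 0 < g * B * N0 := by positivity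
  have hxgt : (1:ℝ) < 1 + p / (g * b * N0) := by
    have := div_pos hp hden; linarith
  set t := b / B with ht
  have ht0 : 0 < t := div_pos hb hB0
  have ht1 : t < 1 := (div_lt_one hB0).2 hB
  have key := strictConcaveOn_log_Ioi.2 (Set.mem_Ioi.2 (by linarith : (0:ℝ) < 1 + p / (g * b * N0)))
      (Set.mem_Ioi.2 one_pos) (by intro h; rw [h] at hxgt; exact lt_irrefl _ hxgt)
      ht0 (by linarith : (0:ℝ) < 1 - t) (by ring)
  rw [smul_eq_mul, smul_eq_mul, smul_eq_mul, smul_eq_mul, Real.log_one, mul_zero, add_zero,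
    mul_one] at key
  have hcomb : t * (1 + p / (g * b * N0)) + (1 - t) = 1 + p / (g * B * N0) := by
    rw [ht]; field_simp; ring
  rw [hcomb] at key
  -- key : t * log x < log y
  have hmul := mul_lt_mul_of_pos_left key hB0
  have hBt : B * (t * Real.log (1 + p / (g * b * N0))) = b * Real.log (1 + p / (g * b * N0)) := by
    rw [ht]; field_simp
  rw [hBt] at hmul
  rw [Real.logb, Real.logb, mul_div_assoc', mul_div_assoc']
  exact (div_lt_div_iff_of_pos_right (Real.log_pos one_lt_two)).2 hmul

private lemma rate_superadd (g N0 b1 p1 b2 p2 : ℝ) (hg : 0 < g) (hN0 : 0 < N0)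
    (hb1 : 0 ≤ b1) (hp1 : 0 ≤ p1) (hb2 : 0 ≤ b2) (hp2 : 0 ≤ p2) :
    b1 * Real.logb 2 (1 + p1 / (g * b1 * N0)) + b2 * Real.logb 2 (1 + p2 / (g * b2 * N0)) ≤
      (b1 + b2) * Real.logb 2 (1 + (p1 + p2) / (g * (b1 + b2) * N0)) := by
  rcases eq_or_lt_of_le hb1 with h1 | h1
  · rw [← h1, zero_mul, zero_add, zero_add]
    exact rate_mono_P g N0 b2 p2 (p1 + p2) hg hN0 hb2 hp2 (by linarith)
  rcases eq_or_lt_of_le hb2 with h2 | h2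
  · rw [← h2, zero_mul, add_zero, add_zero]
    exact rate_mono_P g N0 b1 p1 (p1 + p2) hg hN0 hb1 hp1 (by linarith)
  have hS : 0 < b1 + b2 := by linarith
  have hden1 : 0 < g * b1 * N0 := by positivity
  have hden2 : 0 < g * b2 * N0 := by positivity
  have hx1 : (0:ℝ) < 1 + p1 / (g * b1 * N0) := by
    have := div_nonneg hp1 hden1.le; linarith
  have hx2 : (0:ℝ) < 1 + p2 / (g * b2 * N0) := by
    have := div_nonneg hp2 hden2.le; linarith
  set t := b1 / (b1 + b2) with ht
  have ht0 : 0 < t := div_pos h1 hS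
  have ht1 : t < 1 := (div_lt_one hS).2 (by linarith)
  have key := strictConcaveOn_log_Ioi.concaveOn.2 (Set.mem_Ioi.2 hx1) (Set.mem_Ioi.2 hx2)
      ht0.le (by linarith : (0:ℝ) ≤ 1 - t) (by ring)
  rw [smul_eq_mul, smul_eq_mul, smul_eq_mul, smul_eq_mul] at key
  have hcomb : t * (1 + p1 / (g * b1 * N0)) + (1 - t) * (1 + p2 / (g * b2 * N0)) =
      1 + (p1 + p2) / (g * (b1 + b2) * N0) := by
    rw [ht]; field_simp; ring
  rw [hcomb] at key
  have hmul := mul_le_mul_of_nonneg_left key hS.le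
  have heq : (b1 + b2) * (t * Real.log (1 + p1 / (g * b1 * N0)) +
      (1 - t) * Real.log (1 + p2 / (g * b2 * N0))) =
      b1 * Real.log (1 + p1 / (g * b1 * N0)) + b2 * Real.log (1 + p2 / (g * b2 * N0)) := by
    rw [ht]; field_simp; ring
  rw [heq] at hmul
  rw [Real.logb, Real.logb, Real.logb, mul_div_assoc', mul_div_assoc', mul_div_assoc',
    ← add_div]
  exact (div_le_div_iff_of_pos_right (Real.log_pos one_lt_two)).2 hmul

/-- In the two-recipient allocation problem maximizing `ξ₁·R(B₁,P₁) + ξ₂·R(B₂,P₂)`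
subject to `B₁+B₂ = B`, `P₁+P₂ = P` with identical channels, if `ξ₁ > ξ₂` then at the
optimum `B₁* > B₂*` and `P₁* > P₂*`. -/
theorem two_recipient_monotone_in_importance
    (g N0 Bt Pt ξ₁ ξ₂ : ℝ) (hg : 0 < g) (hN0 : 0 < N0)
    (hBt : 0 < Bt) (hPt : 0 < Pt) (hξ₂ : 0 < ξ₂) (hξ : ξ₂ < ξ₁)
    (B₁ P₁ B₂ P₂ : ℝ)
    (hB1 : 0 ≤ B₁) (hP1 : 0 ≤ P₁) (hB2 : 0 ≤ B₂) (hP2 : 0 ≤ P₂)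
    (hBsum : B₁ + B₂ = Bt) (hPsum : P₁ + P₂ = Pt)
    (hmax : ∀ B₁' P₁' B₂' P₂' : ℝ, 0 ≤ B₁' → 0 ≤ P₁' → 0 ≤ B₂' → 0 ≤ P₂' →
      B₁' + B₂' = Bt → P₁' + P₂' = Pt →
      ξ₁ * (B₁' * Real.logb 2 (1 + P₁' / (g * B₁' * N0))) +
        ξ₂ * (B₂' * Real.logb 2 (1 + P₂' / (g * B₂' * N0))) ≤
      ξ₁ * (B₁ * Real.logb 2 (1 + P₁ / (g * B₁ * N0))) +
        ξ₂ * (B₂ * Real.logb 2 (1 + P₂ / (g * B₂ * N0)))) :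
    B₂ < B₁ ∧ P₂ < P₁ := by
  set R1 := B₁ * Real.logb 2 (1 + P₁ / (g * B₁ * N0)) with hR1def
  set R2 := B₂ * Real.logb 2 (1 + P₂ / (g * B₂ * N0)) with hR2def
  set F := Bt * Real.logb 2 (1 + Pt / (g * Bt * N0)) with hFdef
  -- the deviation giving everything to recipient 1
  have hA := hmax Bt Pt 0 0 hBt.le hPt.le le_rfl le_rfl (add_zero Bt) (add_zero Pt)
  rw [zero_mul, mul_zero, add_zero] at hA
  -- superadditivity
  have hSup : R1 + R2 ≤ F := by
    have := rate_superadd g N0 B₁ P₁ B₂ P₂ hg hN0 hB1 hP1 hB2 hP2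
    rwa [hBsum, hPsum] at this
  have hR1nn : 0 ≤ R1 := rate_nonneg g N0 B₁ P₁ hg hN0 hB1 hP1
  have hR2nn : 0 ≤ R2 := rate_nonneg g N0 B₂ P₂ hg hN0 hB2 hP2
  have hR1geF : F ≤ R1 := by nlinarith
  have hR2zero : R2 = 0 := le_antisymm (by linarith) hR2nn
  have hFpos : 0 < F := by
    have hden : 0 < g * Bt * N0 := by positivity
    exact mul_pos hBt (Real.logb_pos one_lt_two (by have := div_pos hPt hden; linarith))
  have hP1pos : 0 < P₁ := by
    rcases eq_or_lt_of_le hP1 with h | h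
    · exfalso
      rw [hR1def, ← h, zero_div, add_zero, Real.logb_one, mul_zero] at hR1geF
      linarith
    · exact h
  have hB1pos : 0 < B₁ := by
    rcases eq_or_lt_of_le hB1 with h | h
    · exfalso
      rw [hR1def, ← h, zero_mul] at hR1geF
      linarith
    · exact h
  have hB1le : B₁ ≤ Bt := by linarith
  have hP1le : P₁ ≤ Pt := by linarith
  have hB1eq : B₁ = Bt := by
    rcases eq_or_lt_of_le hB1le with h | h
    · exact h
    · exfalso
      have h1 := rate_strict_B g N0 B₁ Bt P₁ hg hN0 hP1pos hB1pos h
      have h2 := rate_mono_P g N0 Bt P₁ Pt hg hN0 hBt.le hP1 hP1le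
      rw [hR1def, hFdef] at *
      linarith
  have hP1eq : P₁ = Pt := by
    rcases eq_or_lt_of_le hP1le with h | h
    · exact h
    · exfalso
      have h1 := rate_strict_P g N0 Bt P₁ Pt hg hN0 hBt hP1 h
      rw [hR1def, hB1eq] at hR1geF
      rw [hFdef] at *
      linarith
  constructor
  · have : B₂ = 0 := by linarith
    rw [this, hB1eq]; exact hBt
  · have : P₂ = 0 := by linarith
    rw [this, hP1eq]; exact hPt
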